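/- arXiv:2502.01447 — 2 statements merged into one kernel-verified Lean document; each statement's English description precedes it below -/
import Mathlib

section
/- Work in Λ(ℂ^7). With ω_1 := e_1∧e_2 + e_3∧e_4, ω_2 := e_1∧e_3 − e_2∧e_4, ω_3 := e_1∧e_4 + e_2∧e_3, define Γ := e_5∧ω_1 + e_6∧ω_2 + e_7∧ω_3 + e_5∧e_6∧e_7 and P := ω_1∧ω_1 + ω_2∧ω_2 + ω_3∧ω_3 + ω_1∧e_6∧e_7 − e_5∧ω_2∧e_7 + e_5∧e_6∧ω_3. Then Γ∧P = 12·e_1∧e_2∧e_3∧e_4∧e_5∧e_6∧e_7; in particular Γ∧P ≠ 0. -/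
/-- The 1-based `i`-th standard basis vector of `ℂ^N`, viewed inside the
exterior algebra `Λ(ℂ^N)` via the canonical inclusion `ι`. -/
noncomputable def e (N : ℕ) (i : ℕ) : ExteriorAlgebra ℂ (Fin N → ℂ) :=
  ExteriorAlgebra.ι ℂ (fun k : Fin N => if (k : ℕ) + 1 = i then (1 : ℂ) else 0)

noncomputable def ω₁ : ExteriorAlgebra ℂ (Fin 7 → ℂ) := e 7 1 * e 7 2 + e 7 3 * e 7 4
noncomputable def ω₂ : ExteriorAlgebra ℂ (Fin 7 → ℂ) := e 7 1 * e 7 3 - e 7 2 * e 7 4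
noncomputable def ω₃ : ExteriorAlgebra ℂ (Fin 7 → ℂ) := e 7 1 * e 7 4 + e 7 2 * e 7 3

/-- `Γ := e_5∧ω_1 + e_6∧ω_2 + e_7∧ω_3 + e_5∧e_6∧e_7` in `Λ(ℂ^7)`. -/
noncomputable def Γform : ExteriorAlgebra ℂ (Fin 7 → ℂ) :=
  e 7 5 * ω₁ + e 7 6 * ω₂ + e 7 7 * ω₃ + e 7 5 * e 7 6 * e 7 7

/-- `P := ω_1∧ω_1 + ω_2∧ω_2 + ω_3∧ω_3 + ω_1∧e_6∧e_7 − e_5∧ω_2∧e_7 + e_5∧e_6∧ω_3`. -/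
noncomputable def Pform : ExteriorAlgebra ℂ (Fin 7 → ℂ) :=
  ω₁ * ω₁ + ω₂ * ω₂ + ω₃ * ω₃ + ω₁ * e 7 6 * e 7 7 - e 7 5 * ω₂ * e 7 7 + e 7 5 * e 7 6 * ω₃


/-!
The `ωₐ` are even, hence commute with every `eₖ`, and they are self-dual:
`ω₁∧ω₁ = ω₂∧ω₂ = ω₃∧ω₃ = 2 e₁₂₃₄`, while `ωₐ∧e₁₂₃₄ = 0` for degree reasons.
Writing `εᵦ` for the Hodge dual of `e_{b+5}` in `⟨e₅, e₆, e₇⟩`, one has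
`Γ = ∑ₐ ωₐ e_{a+5} + e₅₆₇` and `P = ∑ₐ ωₐ∧ωₐ + ∑ᵦ ωᵦ εᵦ`, and `e_{a+5}∧εᵦ = δₐᵦ e₅₆₇`.
Expanding, only `e₅₆₇ ∧ ∑ ωₐ∧ωₐ` and the diagonal terms `ωₐ∧ωₐ∧e₅₆₇` survive, each sum
contributing `6 e₁…₇`. The top form is nonzero because the determinant, extended to
`Λ(ℂ⁷)`, takes the value `1` on it.
-/

open ExteriorAlgebra

section General

variable {R M : Type*} [CommRing R] [AddCommGroup M] [Module R M]

theorem ExteriorAlgebra.ι_mul_ι_swap (x y : M) : ι R y * ι R x = -(ι R x * ι R y) :=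
  eq_neg_of_add_eq_zero_left (ι_add_mul_swap y x)

theorem ExteriorAlgebra.commute_ι_ι_mul_ι (x y z : M) : Commute (ι R z) (ι R x * ι R y) := by
  rw [Commute, SemiconjBy, ← mul_assoc, ι_mul_ι_swap x z, neg_mul, mul_assoc, ι_mul_ι_swap y z,
    mul_neg, neg_neg, mul_assoc]

theorem ExteriorAlgebra.ιMulti_basis_ne_zero [Nontrivial R] {n : ℕ}
    (b : Module.Basis (Fin n) R M) : ιMulti R n b ≠ 0 := by
  intro h
  have := congrArg (liftAlternating (Pi.single (M := fun i => M [⋀^Fin i]→ₗ[R] R) n b.det)) h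
  rw [liftAlternating_apply_ιMulti, Pi.single_eq_same, b.det_self, map_zero] at this
  exact one_ne_zero this

theorem mul_eq_of_dual_pairing {A ι : Type*} [Ring A] [Fintype ι] [DecidableEq ι]
    (ω f ε : ι → A) (f₀ s : A)
    (hfω : ∀ a b, Commute (f a) (ω b)) (hfs : ∀ a, Commute (f a) s) (hf₀ω : ∀ b, Commute f₀ (ω b))
    (hωs : ∀ a, ω a * s = 0) (hfε : ∀ a b, f a * ε b = if a = b then f₀ else 0)
    (hf₀ε : ∀ b, f₀ * ε b = 0) :
    (∑ a, ω a * f a + f₀) * (s + ∑ b, ω b * ε b) = f₀ * s + (∑ a, ω a * ω a) * f₀ := by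
  have h₁ (a : ι) : ω a * f a * s = 0 := by
    rw [mul_assoc, (hfs a).eq, ← mul_assoc, hωs, zero_mul]
  have h₂ (a b : ι) : ω a * f a * (ω b * ε b) = if a = b then ω a * ω a * f₀ else 0 := by
    rw [(hfω a b).mul_mul_mul_comm, hfε, mul_ite, mul_zero]
    rcases eq_or_ne a b with rfl | hab
    · rw [if_pos rfl]
    · simp only [if_neg hab]
  have h₃ (b : ι) : f₀ * (ω b * ε b) = 0 := by
    rw [← mul_assoc, (hf₀ω b).eq, mul_assoc, hf₀ε, mul_zero]
  simp [add_mul, mul_add, Finset.sum_mul, Finset.mul_sum, h₁, h₂, h₃]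

end General

theorem e_mul_e_swap (N i j : ℕ) : e N j * e N i = -(e N i * e N j) := ι_mul_ι_swap _ _

theorem e_mul_e_mul_swap (N i j : ℕ) (x : ExteriorAlgebra ℂ (Fin N → ℂ)) :
    e N j * (e N i * x) = -(e N i * (e N j * x)) := by
  rw [← mul_assoc, e_mul_e_swap, neg_mul, mul_assoc]

theorem e_mul_self (N i : ℕ) : e N i * e N i = 0 := ι_sq_zero _

theorem e_mul_e_mul_self (N i : ℕ) (x : ExteriorAlgebra ℂ (Fin N → ℂ)) :
    e N i * (e N i * x) = 0 := by
  rw [← mul_assoc, e_mul_self, zero_mul]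

theorem commute_e_e_mul_e (N i j k : ℕ) : Commute (e N k) (e N i * e N j) :=
  commute_ι_ι_mul_ι _ _ _

theorem ι_basisFun_eq_e (N : ℕ) (i : Fin N) : ι ℂ (Pi.basisFun ℂ (Fin N) i) = e N (i + 1) := by
  rw [e, Pi.basisFun_apply]
  congr 1
  funext k
  simp [Pi.single_apply, Fin.ext_iff]

theorem e_prod_ne_zero : e 7 1 * e 7 2 * e 7 3 * e 7 4 * e 7 5 * e 7 6 * e 7 7 ≠ 0 := by
  have h : ιMulti ℂ 7 (Pi.basisFun ℂ (Fin 7)) =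
      e 7 1 * e 7 2 * e 7 3 * e 7 4 * e 7 5 * e 7 6 * e 7 7 := by
    simp only [ιMulti_apply, List.ofFn_succ, List.ofFn_zero, List.prod_cons, List.prod_nil,
      ι_basisFun_eq_e, mul_one, mul_assoc]
    rfl
  exact h ▸ ιMulti_basis_ne_zero _

local notation "vol₄" => e 7 1 * e 7 2 * e 7 3 * e 7 4

noncomputable def ω : Fin 3 → ExteriorAlgebra ℂ (Fin 7 → ℂ) := ![ω₁, ω₂, ω₃]

noncomputable def ε : Fin 3 → ExteriorAlgebra ℂ (Fin 7 → ℂ) :=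
  ![e 7 6 * e 7 7, e 7 7 * e 7 5, e 7 5 * e 7 6]

theorem commute_e_ω₁ (k : ℕ) : Commute (e 7 k) ω₁ :=
  (commute_e_e_mul_e _ _ _ _).add_right (commute_e_e_mul_e _ _ _ _)

theorem commute_e_ω₂ (k : ℕ) : Commute (e 7 k) ω₂ :=
  (commute_e_e_mul_e _ _ _ _).sub_right (commute_e_e_mul_e _ _ _ _)

theorem commute_e_ω₃ (k : ℕ) : Commute (e 7 k) ω₃ :=
  (commute_e_e_mul_e _ _ _ _).add_right (commute_e_e_mul_e _ _ _ _)

theorem commute_e_ω (k : ℕ) (a : Fin 3) : Commute (e 7 k) (ω a) := by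
  fin_cases a
  exacts [commute_e_ω₁ k, commute_e_ω₂ k, commute_e_ω₃ k]

theorem sum_ω_mul_self : ∑ a, ω a * ω a = (6 : ℂ) • vol₄ := by
  simp only [Fin.sum_univ_three, ω, Matrix.cons_val_zero, Matrix.cons_val_one, Matrix.cons_val_two,
    Matrix.head_cons, Matrix.tail_cons, ω₁, ω₂, ω₃, add_mul, mul_add, sub_mul, mul_sub, mul_assoc,
    mul_neg, neg_neg, e_mul_self, mul_zero, e_mul_e_swap 7 2 4, e_mul_e_swap 7 3 4,
    e_mul_e_mul_swap 7 1 2, e_mul_e_mul_swap 7 1 3, e_mul_e_mul_swap 7 1 4, e_mul_e_mul_swap 7 2 3,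
    e_mul_e_mul_swap 7 2 4, e_mul_e_mul_swap 7 3 4]
  module

theorem ω_mul_vol₄ (a : Fin 3) : ω a * vol₄ = 0 := by
  fin_cases a <;>
  simp [ω, ω₁, ω₂, ω₃, add_mul, sub_mul, mul_assoc, e_mul_self, e_mul_e_mul_self,
    e_mul_e_mul_swap 7 1 2, e_mul_e_mul_swap 7 1 3, e_mul_e_mul_swap 7 1 4, e_mul_e_mul_swap 7 2 3,
    e_mul_e_mul_swap 7 2 4, e_mul_e_mul_swap 7 3 4]

theorem e_mul_ε (a b : Fin 3) :
    e 7 (a + 5) * ε b = if a = b then e 7 5 * e 7 6 * e 7 7 else 0 := by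
  fin_cases a <;> fin_cases b <;>
  simp [ε, mul_assoc, e_mul_self, e_mul_e_mul_self, e_mul_e_swap 7 5 7, e_mul_e_swap 7 6 7,
    e_mul_e_mul_swap 7 5 6, e_mul_e_mul_swap 7 5 7, e_mul_e_mul_swap 7 6 7]

theorem e₅₆₇_mul_ε (b : Fin 3) : e 7 5 * e 7 6 * e 7 7 * ε b = 0 := by
  fin_cases b <;>
  simp [ε, mul_assoc, e_mul_self, e_mul_e_mul_self, e_mul_e_swap 7 5 7, e_mul_e_swap 7 6 7,
    e_mul_e_mul_swap 7 5 6, e_mul_e_mul_swap 7 5 7, e_mul_e_mul_swap 7 6 7]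

theorem Γform_eq_sum : Γform = ∑ a : Fin 3, ω a * e 7 (a + 5) + e 7 5 * e 7 6 * e 7 7 := by
  rw [Γform, Fin.sum_univ_three, (commute_e_ω₁ 5).eq, (commute_e_ω₂ 6).eq, (commute_e_ω₃ 7).eq]
  rfl

theorem Pform_eq_sum : Pform = ∑ a, ω a * ω a + ∑ b, ω b * ε b := by
  rw [Pform, (commute_e_ω₂ 5).eq, ((commute_e_ω₃ 5).mul_left (commute_e_ω₃ 6)).eq]
  simp only [Fin.sum_univ_three, ω, ε, Matrix.cons_val_zero, Matrix.cons_val_one,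
    Matrix.cons_val_two, Matrix.head_cons, Matrix.tail_cons, e_mul_e_swap 7 5 7, mul_neg, mul_assoc]
  abel

theorem Γform_mul_Pform :
    Γform * Pform = (12 : ℂ) • (e 7 1 * e 7 2 * e 7 3 * e 7 4 * e 7 5 * e 7 6 * e 7 7) := by
  have hf (a b : Fin 3) : Commute (e 7 (a + 5)) (ω b) := commute_e_ω _ b
  have hf₀ (b : Fin 3) : Commute (e 7 5 * e 7 6 * e 7 7) (ω b) :=
    ((commute_e_ω 5 b).mul_left (commute_e_ω 6 b)).mul_left (commute_e_ω 7 b)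
  have hs {x : ExteriorAlgebra ℂ (Fin 7 → ℂ)} (hx : ∀ b, Commute x (ω b)) :
      Commute x (∑ b, ω b * ω b) :=
    Commute.sum_right _ _ _ fun b _ => (hx b).mul_right (hx b)
  have hωs (a : Fin 3) : ω a * ∑ b, ω b * ω b = 0 := by
    rw [sum_ω_mul_self, mul_smul_comm, ω_mul_vol₄, smul_zero]
  rw [Γform_eq_sum, Pform_eq_sum,
    mul_eq_of_dual_pairing ω _ ε _ _ hf (fun a => hs (hf a)) hf₀ hωs e_mul_ε e₅₆₇_mul_ε,
    (hs hf₀).eq, sum_ω_mul_self, smul_mul_assoc, ← add_smul]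
  simp only [mul_assoc]
  norm_num

/-- `Γ∧P = 12·e_1∧e_2∧e_3∧e_4∧e_5∧e_6∧e_7`; in particular `Γ∧P ≠ 0`. -/
theorem stmt_5 :
    Γform * Pform =
      (12 : ℂ) • (e 7 1 * e 7 2 * e 7 3 * e 7 4 * e 7 5 * e 7 6 * e 7 7) ∧
    Γform * Pform ≠ 0 :=
  ⟨Γform_mul_Pform, Γform_mul_Pform ▸ smul_ne_zero (by norm_num) e_prod_ne_zero⟩
end

section
/- Let l ≥ 1 be a natural number and set N = 4l+3. In Λ(ℂ^N), set β := Σ_{j=1}^{2l+1} e_{2j−1}∧e_{2j}. Then (e_{4l+3}∧β^l) ∧ β^{l+1} = (2l+1)!·e_1∧e_2∧…∧e_{4l+3}; in particular this product is nonzero. -/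
/-- The wedge product `e_a ∧ e_{a+1} ∧ … ∧ e_{a+n−1}` in `Λ(ℂ^N)`. -/
noncomputable def wedgeSeq (N a n : ℕ) : ExteriorAlgebra ℂ (Fin N → ℂ) :=
  ((List.range' a n).map (e N)).prod

namespace Commute

variable {A : Type*} [Semiring A]

theorem add_pow_succ_of_mul_self_eq_zero {a b : A} (h : Commute a b) (ha : a * a = 0) (n : ℕ) :
    (a + b) ^ (n + 1) = b ^ (n + 1) + (n + 1) • (a * b ^ n) := by
  induction n with
  | zero => simp [add_comm]
  | succ n ih =>
    have hsq : a * b ^ n * a = 0 := by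
      rw [mul_assoc, ← (h.pow_right n).eq, ← mul_assoc, ha, zero_mul]
    rw [pow_succ, ih, add_mul, smul_mul_assoc, mul_add, mul_add, hsq, ← (h.pow_right (n + 1)).eq,
      mul_assoc a, ← pow_succ, ← pow_succ, succ_nsmul _ (n + 1), zero_add]
    abel

end Commute

namespace List

variable {A : Type*} [Semiring A] {L : List A}

theorem sum_pow_length_succ_eq_zero (hc : L.Pairwise Commute) (hsq : ∀ x ∈ L, x * x = 0) :
    L.sum ^ (L.length + 1) = 0 := by
  induction L with
  | nil => simp
  | cons a L ih =>
    rw [pairwise_cons] at hc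
    have hL : L.sum ^ (L.length + 1) = 0 := ih hc.2 fun x hx => hsq x (mem_cons_of_mem a hx)
    rw [sum_cons, length_cons,
      (Commute.list_sum_right a L hc.1).add_pow_succ_of_mul_self_eq_zero (hsq a mem_cons_self),
      pow_succ, hL, zero_mul, mul_zero, smul_zero, add_zero]

theorem sum_pow_length_eq_factorial_smul_prod (hc : L.Pairwise Commute)
    (hsq : ∀ x ∈ L, x * x = 0) : L.sum ^ L.length = L.length.factorial • L.prod := by
  induction L with
  | nil => simp
  | cons a L ih =>
    rw [pairwise_cons] at hc
    have hsq' : ∀ x ∈ L, x * x = 0 := fun x hx => hsq x (mem_cons_of_mem a hx)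
    rw [sum_cons, length_cons,
      (Commute.list_sum_right a L hc.1).add_pow_succ_of_mul_self_eq_zero (hsq a mem_cons_self),
      sum_pow_length_succ_eq_zero hc.2 hsq', ih hc.2 hsq', zero_add, mul_smul_comm, smul_smul,
      prod_cons, Nat.factorial_succ]

theorem prod_map_range'_pairs {M : Type*} [Monoid M] (f : ℕ → M) (n : ℕ) :
    ((range' 1 n).map fun j => f (2 * j - 1) * f (2 * j)).prod =
      ((range' 1 (2 * n)).map f).prod := by
  induction n with
  | zero => simp
  | succ n ih =>
    rw [range'_concat, map_append, prod_append, ih, show 2 * (n + 1) = 2 * n + 1 + 1 by ring,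
      range'_concat, range'_concat, map_append, map_append, prod_append, prod_append]
    simp only [map_cons, map_nil, prod_cons, prod_nil, mul_one, mul_assoc]
    congr 3 <;> omega

end List

theorem Finset.sum_Icc_one_eq_sum_map_range' {B : Type*} [AddCommMonoid B] (f : ℕ → B) (n : ℕ) :
    ∑ j ∈ Finset.Icc 1 n, f j = ((List.range' 1 n).map f).sum := by
  rw [Nat.Icc_eq_range']
  simp [Finset.sum]

namespace ExteriorAlgebra

variable {R M : Type*} [CommRing R] [AddCommGroup M] [Module R M]

theorem ι_mul_ι_commute_ι (x y z : M) : Commute (ι R x * ι R y) (ι R z) := by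
  have hxz : ι R x * ι R z = -(ι R z * ι R x) := eq_neg_of_add_eq_zero_left (ι_add_mul_swap x z)
  have hyz : ι R y * ι R z = -(ι R z * ι R y) := eq_neg_of_add_eq_zero_left (ι_add_mul_swap y z)
  calc ι R x * ι R y * ι R z = -(ι R x * ι R z * ι R y) := by
        rw [mul_assoc, hyz, mul_neg, mul_assoc]
    _ = ι R z * (ι R x * ι R y) := by rw [hxz, neg_mul, neg_neg, mul_assoc]

theorem ι_mul_ι_commute (x y z w : M) : Commute (ι R x * ι R y) (ι R z * ι R w) :=
  (ι_mul_ι_commute_ι x y z).mul_right (ι_mul_ι_commute_ι x y w)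

theorem ι_mul_ι_mul_self (x y : M) : ι R x * ι R y * (ι R x * ι R y) = 0 := by
  rw [← mul_assoc, (ι_mul_ι_commute_ι x y x).eq, ← mul_assoc, ι_sq_zero, zero_mul, zero_mul]

theorem ιMulti_ne_zero_of_det_ne_zero {n : ℕ} (v : Fin n → Fin n → R)
    (hv : (Matrix.of v).det ≠ 0) : ιMulti R n v ≠ 0 := by
  intro h
  have := liftAlternating_apply_ιMulti
    (Pi.single (M := fun i => (Fin n → R) [⋀^Fin i]→ₗ[R] R) n Matrix.detRowAlternating) v
  rw [h, map_zero, Pi.single_eq_same] at this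
  exact hv this.symm

end ExteriorAlgebra

theorem e_val_add_one (N : ℕ) (i : Fin N) : e N (i + 1) = ExteriorAlgebra.ι ℂ (Pi.single i 1) := by
  unfold e
  congr 1
  ext k
  simp [Pi.single_apply, Fin.val_inj]

theorem wedgeSeq_succ (N a n : ℕ) : wedgeSeq N a (n + 1) = wedgeSeq N a n * e N (a + n) := by
  simp [wedgeSeq, List.range'_concat]

theorem wedgeSeq_one_eq_ιMulti (N : ℕ) :
    wedgeSeq N 1 N = ExteriorAlgebra.ιMulti ℂ N fun i => Pi.single i 1 := by
  rw [ExteriorAlgebra.ιMulti_apply, wedgeSeq]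
  congr 1
  apply List.ext_getElem <;> simp [← e_val_add_one, add_comm]

theorem wedgeSeq_one_ne_zero (N : ℕ) : wedgeSeq N 1 N ≠ 0 := by
  rw [wedgeSeq_one_eq_ιMulti]
  refine ExteriorAlgebra.ιMulti_ne_zero_of_det_ne_zero _ ?_
  have : (Matrix.of fun i : Fin N => (Pi.single i 1 : Fin N → ℂ)) = 1 := by
    ext i j
    exact Matrix.one_eq_pi_single.symm
  simp [this]

theorem sum_pairs_pow_self (N n : ℕ) :
    (∑ j ∈ Finset.Icc 1 n, e N (2 * j - 1) * e N (2 * j)) ^ n =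
      n.factorial • wedgeSeq N 1 (2 * n) := by
  set L := (List.range' 1 n).map fun j => e N (2 * j - 1) * e N (2 * j)
  have hlen : L.length = n := by simp [L]
  have hc : L.Pairwise Commute :=
    List.pairwise_map.mpr <|
      List.pairwise_of_forall fun _ _ => ExteriorAlgebra.ι_mul_ι_commute _ _ _ _
  have hsq : ∀ x ∈ L, x * x = 0 := by
    simp only [L, List.mem_map]
    rintro _ ⟨j, -, rfl⟩
    exact ExteriorAlgebra.ι_mul_ι_mul_self _ _
  have hpow := L.sum_pow_length_eq_factorial_smul_prod hc hsq
  rw [hlen] at hpow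
  rw [Finset.sum_Icc_one_eq_sum_map_range', hpow, List.prod_map_range'_pairs, wedgeSeq]

theorem e_commute_sum_pairs (N i n : ℕ) :
    Commute (e N i) (∑ j ∈ Finset.Icc 1 n, e N (2 * j - 1) * e N (2 * j)) :=
  Commute.sum_right _ _ _ fun _ _ => (ExteriorAlgebra.ι_mul_ι_commute_ι _ _ _).symm

theorem stmt_9_general (l : ℕ) :
    (e (4 * l + 3) (4 * l + 3) *
        (∑ j ∈ Finset.Icc 1 (2 * l + 1),
          e (4 * l + 3) (2 * j - 1) * e (4 * l + 3) (2 * j)) ^ l) *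
      (∑ j ∈ Finset.Icc 1 (2 * l + 1),
          e (4 * l + 3) (2 * j - 1) * e (4 * l + 3) (2 * j)) ^ (l + 1) =
      ((2 * l + 1).factorial : ℂ) • wedgeSeq (4 * l + 3) 1 (4 * l + 3) ∧
    (e (4 * l + 3) (4 * l + 3) *
        (∑ j ∈ Finset.Icc 1 (2 * l + 1),
          e (4 * l + 3) (2 * j - 1) * e (4 * l + 3) (2 * j)) ^ l) *
      (∑ j ∈ Finset.Icc 1 (2 * l + 1),
          e (4 * l + 3) (2 * j - 1) * e (4 * l + 3) (2 * j)) ^ (l + 1) ≠ 0 := by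
  set β := ∑ j ∈ Finset.Icc 1 (2 * l + 1), e (4 * l + 3) (2 * j - 1) * e (4 * l + 3) (2 * j)
  have hwedge := wedgeSeq_succ (4 * l + 3) 1 (2 * (2 * l + 1))
  rw [show 1 + 2 * (2 * l + 1) = 4 * l + 3 by ring, show 2 * (2 * l + 1) + 1 = 4 * l + 3 by ring]
    at hwedge
  have hprod : e (4 * l + 3) (4 * l + 3) * β ^ l * β ^ (l + 1) =
      ((2 * l + 1).factorial : ℂ) • wedgeSeq (4 * l + 3) 1 (4 * l + 3) := by
    rw [mul_assoc, ← pow_add, show l + (l + 1) = 2 * l + 1 by ring,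
      ((e_commute_sum_pairs _ _ _).pow_right _).eq, sum_pairs_pow_self, smul_mul_assoc,
      ← hwedge, Nat.cast_smul_eq_nsmul]
  refine ⟨hprod, hprod ▸ smul_ne_zero ?_ (wedgeSeq_one_ne_zero _)⟩
  exact_mod_cast (2 * l + 1).factorial_ne_zero

/-- for `N = 4l+3` and `β := Σ_{j=1}^{2l+1} e_{2j−1}∧e_{2j}` in `Λ(ℂ^N)`,
one has `(e_{4l+3}∧β^l) ∧ β^{l+1} = (2l+1)!·e_1∧…∧e_{4l+3}`; in particular it is nonzero. -/
theorem stmt_9 (l : ℕ) (hl : 1 ≤ l) :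
    (e (4 * l + 3) (4 * l + 3) *
        (∑ j ∈ Finset.Icc 1 (2 * l + 1),
          e (4 * l + 3) (2 * j - 1) * e (4 * l + 3) (2 * j)) ^ l) *
      (∑ j ∈ Finset.Icc 1 (2 * l + 1),
          e (4 * l + 3) (2 * j - 1) * e (4 * l + 3) (2 * j)) ^ (l + 1) =
      ((2 * l + 1).factorial : ℂ) • wedgeSeq (4 * l + 3) 1 (4 * l + 3) ∧
    (e (4 * l + 3) (4 * l + 3) *
        (∑ j ∈ Finset.Icc 1 (2 * l + 1),
          e (4 * l + 3) (2 * j - 1) * e (4 * l + 3) (2 * j)) ^ l) *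
      (∑ j ∈ Finset.Icc 1 (2 * l + 1),
          e (4 * l + 3) (2 * j - 1) * e (4 * l + 3) (2 * j)) ^ (l + 1) ≠ 0 :=
  stmt_9_general l
end
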